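/- Let n ≥ 1, p > -1, 0 ≤ μ < p+1, ε > 0, γ > 0, and set α = (p+2)/(p+1-μ) + ε. Define u(x) = |x|^α, a(x) = |x|^{μ+ε(p+1-μ)} + c₀|x|^μ, λ₀(x) = c̄|x|^{ε(p+1-μ)} + γ, where c̄ = (α+n-2)α^{p+1} + α^μ and c₀ = γ·α^{-μ}. Then for every x ∈ B₁ with x ≠ 0, |∇u(x)|^p · Δu(x) + a(x)·|∇u(x)|^μ = λ₀(x)·u(x)^μ. -/

import Mathlib

open Real InnerProductSpace

lemma ce_fderiv_eq {n : ℕ} (α : ℝ) {y : EuclideanSpace ℝ (Fin n)} (hy : y ≠ 0) :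
    fderiv ℝ (fun z : EuclideanSpace ℝ (Fin n) => ‖z‖ ^ α) y
      = (α * ((‖y‖ ^ 2 : ℝ)) ^ (α / 2 - 1)) • innerSL ℝ y := by
  have hq0 : (‖y‖ ^ 2 : ℝ) ≠ 0 := pow_ne_zero _ (norm_ne_zero_iff.mpr hy)
  have hu_eq : (fun z : EuclideanSpace ℝ (Fin n) => ‖z‖ ^ α)
      = fun z => ((‖z‖ ^ 2 : ℝ)) ^ (α / 2) := by
    funext z
    rw [← Real.rpow_natCast ‖z‖ 2, ← Real.rpow_mul (norm_nonneg z)]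
    congr 1
    ring
  have hD : HasFDerivAt (fun z : EuclideanSpace ℝ (Fin n) => ((‖z‖ ^ 2 : ℝ)) ^ (α / 2))
      ((α * ((‖y‖ ^ 2 : ℝ)) ^ (α / 2 - 1)) • innerSL ℝ y) y := by
    have h := ((hasStrictFDerivAt_norm_sq y).hasFDerivAt).rpow_const (p := α / 2) (Or.inl hq0)
    convert h using 1
    ext z
    simp [smul_smul]
    module
  rw [hu_eq, hD.fderiv]

lemma ce_grad {n : ℕ} (α : ℝ) (hα : 0 < α) {x : EuclideanSpace ℝ (Fin n)} (hx : x ≠ 0) :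
    ‖gradient (fun z : EuclideanSpace ℝ (Fin n) => ‖z‖ ^ α) x‖ = α * ‖x‖ ^ (α - 1) := by
  have hf := ce_fderiv_eq (n := n) α hx
  have hx' : ‖x‖ ≠ 0 := norm_ne_zero_iff.mpr hx
  have hc : (0:ℝ) < α * ((‖x‖ ^ 2 : ℝ)) ^ (α / 2 - 1) := by positivity
  have hg : gradient (fun z : EuclideanSpace ℝ (Fin n) => ‖z‖ ^ α) x
      = (α * ((‖x‖ ^ 2 : ℝ)) ^ (α / 2 - 1)) • x := by
    unfold gradient
    rw [hf]
    rw [show (α * ((‖x‖ ^ 2 : ℝ)) ^ (α / 2 - 1)) • innerSL ℝ x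
        = toDual ℝ (EuclideanSpace ℝ (Fin n)) ((α * ((‖x‖ ^ 2 : ℝ)) ^ (α / 2 - 1)) • x) by
      ext z
      simp [toDual_apply_apply, real_inner_smul_left]]
    exact LinearIsometryEquiv.symm_apply_apply _ _
  have h4 : ((‖x‖ ^ 2 : ℝ)) ^ (α / 2 - 1) = ‖x‖ ^ (2 * (α / 2 - 1)) := by
    rw [← Real.rpow_natCast ‖x‖ 2, ← Real.rpow_mul (norm_nonneg x)]
    norm_num
  rw [hg, norm_smul, Real.norm_eq_abs, abs_of_pos hc, h4, mul_assoc]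
  congr 1
  rw [← Real.rpow_add_one hx']
  congr 1
  ring

lemma ce_lap {n : ℕ} (α : ℝ) {x : EuclideanSpace ℝ (Fin n)} (hx : x ≠ 0) :
    ∑ i, iteratedFDeriv ℝ 2 (fun z : EuclideanSpace ℝ (Fin n) => ‖z‖ ^ α) x
        ![EuclideanSpace.single i 1, EuclideanSpace.single i 1]
      = α * (α + n - 2) * ‖x‖ ^ (α - 2) := by
  have hx' : ‖x‖ ≠ 0 := norm_ne_zero_iff.mpr hx
  have hq0 : (‖x‖ ^ 2 : ℝ) ≠ 0 := pow_ne_zero _ hx'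
  set c' : EuclideanSpace ℝ (Fin n) →L[ℝ] ℝ :=
    α • (((α / 2 - 1) * (‖x‖ ^ 2 : ℝ) ^ (α / 2 - 1 - 1)) • ((2:ℕ) • innerSL ℝ x)) with hc'def
  have hc : HasFDerivAt (fun z : EuclideanSpace ℝ (Fin n) => α * ((‖z‖ ^ 2 : ℝ)) ^ (α / 2 - 1))
      c' x :=
    (((hasStrictFDerivAt_norm_sq x).hasFDerivAt).rpow_const (Or.inl hq0)).const_mul α
  have hL : HasFDerivAt (fun z : EuclideanSpace ℝ (Fin n) => innerSL ℝ z)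
      (innerSL ℝ (E := EuclideanSpace ℝ (Fin n))) x :=
    (innerSL ℝ (E := EuclideanSpace ℝ (Fin n))).hasFDerivAt
  have hF := hc.smul hL
  have hev : fderiv ℝ (fun z : EuclideanSpace ℝ (Fin n) => ‖z‖ ^ α) =ᶠ[nhds x]
      fun z => (α * ((‖z‖ ^ 2 : ℝ)) ^ (α / 2 - 1)) • innerSL ℝ z := by
    filter_upwards [IsOpen.mem_nhds isOpen_compl_singleton hx] with z hz
    exact ce_fderiv_eq α hz
  have h2 := hev.fderiv_eq.trans hF.fderiv
  have hsum : ∑ i, x i * x i = (‖x‖ ^ 2 : ℝ) := by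
    rw [← real_inner_self_eq_norm_sq, PiLp.inner_apply]
    simp [PiLp.inner_apply, sq]
  have hterm : ∀ i, iteratedFDeriv ℝ 2 (fun z : EuclideanSpace ℝ (Fin n) => ‖z‖ ^ α) x
      ![EuclideanSpace.single i 1, EuclideanSpace.single i 1]
      = α * ((‖x‖ ^ 2 : ℝ)) ^ (α / 2 - 1)
        + (α * ((α / 2 - 1) * (‖x‖ ^ 2 : ℝ) ^ (α / 2 - 1 - 1) * 2)) * (x i * x i) := by
    intro i
    rw [iteratedFDeriv_two_apply, h2]
    simp [hc'def, EuclideanSpace.inner_single_right, EuclideanSpace.inner_single_left,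
      real_inner_smul_left, ContinuousLinearMap.smulRight_apply, innerSL_apply_apply]
    have h1 : innerSL ℝ (EuclideanSpace.single i (1:ℝ)) (EuclideanSpace.single i (1:ℝ)) = 1 := by
      simp [innerSL_apply_apply]
    erw [h1]
    ring
  rw [Finset.sum_congr rfl fun i _ => hterm i, Finset.sum_add_distrib, Finset.sum_const,
    ← Finset.mul_sum, hsum]
  simp only [Finset.card_univ, Fintype.card_fin, nsmul_eq_mul]
  have h3 : (‖x‖ ^ 2 : ℝ) ^ (α / 2 - 1 - 1) * (‖x‖ ^ 2 : ℝ) = (‖x‖ ^ 2 : ℝ) ^ (α / 2 - 1) := by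
    rw [← Real.rpow_add_one hq0]
    congr 1
    ring
  have h4 : ((‖x‖ ^ 2 : ℝ)) ^ (α / 2 - 1) = ‖x‖ ^ (α - 2) := by
    rw [← Real.rpow_natCast ‖x‖ 2, ← Real.rpow_mul (norm_nonneg x)]
    congr 1
    push_cast
    ring
  linear_combination (α * (α - 2)) * h3 + (α * (α + (n:ℝ) - 2)) * h4

theorem counterexample_equation {n : ℕ} (hn : 1 ≤ n) (p μ ε γ : ℝ)
    (hp : -1 < p) (hμ0 : 0 ≤ μ) (hμ1 : μ < p + 1) (hε : 0 < ε) (hγ : 0 < γ) :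
    let α : ℝ := (p + 2) / (p + 1 - μ) + ε
    let u : EuclideanSpace ℝ (Fin n) → ℝ := fun x => ‖x‖ ^ α
    let cbar : ℝ := (α + n - 2) * α ^ (p + 1) + α ^ μ
    let c₀ : ℝ := γ * α ^ (-μ)
    let a : EuclideanSpace ℝ (Fin n) → ℝ := fun x =>
      ‖x‖ ^ (μ + ε * (p + 1 - μ)) + c₀ * ‖x‖ ^ μ
    let lam₀ : EuclideanSpace ℝ (Fin n) → ℝ := fun x =>
      cbar * ‖x‖ ^ (ε * (p + 1 - μ)) + γ
    ∀ x ∈ Metric.ball (0 : EuclideanSpace ℝ (Fin n)) 1, x ≠ 0 →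
      ‖gradient u x‖ ^ p *
          (∑ i, iteratedFDeriv ℝ 2 u x
            ![EuclideanSpace.single i 1, EuclideanSpace.single i 1]) +
        a x * ‖gradient u x‖ ^ μ = lam₀ x * u x ^ μ := by
  intro α u cbar c₀ a lam₀ x hxball hx0
  have hk : 0 < p + 1 - μ := by linarith
  have hαdef : α = (p + 2) / (p + 1 - μ) + ε := rfl
  have hα : 0 < α := by
    have := div_pos (show (0:ℝ) < p + 2 by linarith) hk
    rw [hαdef]; linarith
  have hr : 0 < ‖x‖ := norm_pos_iff.mpr hx0
  have hgrad := ce_grad (n := n) α hα hx0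
  have hlap := ce_lap (n := n) α hx0
  simp only [u, a, lam₀, cbar, c₀]
  rw [hgrad, hlap]
  have e1 : (α * ‖x‖ ^ (α - 1)) ^ p = α ^ p * ‖x‖ ^ ((α - 1) * p) := by
    rw [Real.mul_rpow hα.le (Real.rpow_nonneg hr.le _), ← Real.rpow_mul hr.le]
  have e2 : (α * ‖x‖ ^ (α - 1)) ^ μ = α ^ μ * ‖x‖ ^ ((α - 1) * μ) := by
    rw [Real.mul_rpow hα.le (Real.rpow_nonneg hr.le _), ← Real.rpow_mul hr.le]
  have e3 : (‖x‖ ^ α) ^ μ = ‖x‖ ^ (α * μ) := (Real.rpow_mul hr.le α μ).symm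
  rw [e1, e2, e3]
  have hαk : α * (p + 1 - μ) = (p + 2) + ε * (p + 1 - μ) := by
    rw [hαdef]; field_simp
  have X1 : ‖x‖ ^ ((α - 1) * p) * ‖x‖ ^ (α - 2) = ‖x‖ ^ (α * μ + ε * (p + 1 - μ)) := by
    rw [← Real.rpow_add hr]; congr 1; linear_combination hαk
  have X2 : ‖x‖ ^ (μ + ε * (p + 1 - μ)) * ‖x‖ ^ ((α - 1) * μ)
      = ‖x‖ ^ (α * μ + ε * (p + 1 - μ)) := by
    rw [← Real.rpow_add hr]; congr 1; ring
  have X3 : ‖x‖ ^ μ * ‖x‖ ^ ((α - 1) * μ) = ‖x‖ ^ (α * μ) := by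
    rw [← Real.rpow_add hr]; congr 1; ring
  have X4 : ‖x‖ ^ (ε * (p + 1 - μ)) * ‖x‖ ^ (α * μ) = ‖x‖ ^ (α * μ + ε * (p + 1 - μ)) := by
    rw [← Real.rpow_add hr]; congr 1; ring
  have X5 : α ^ p * α = α ^ (p + 1) := (Real.rpow_add_one hα.ne' p).symm
  have X6 : α ^ (-μ) * α ^ μ = 1 := by
    rw [← Real.rpow_add hα]; simp
  linear_combination ((α + (n:ℝ) - 2) * α ^ p * α) * X1
    + ((α + (n:ℝ) - 2) * ‖x‖ ^ (α * μ + ε * (p + 1 - μ))) * X5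
    - ((α + (n:ℝ) - 2) * α ^ (p + 1)) * X4
    + α ^ μ * X2 - α ^ μ * X4
    + (γ * α ^ (-μ) * α ^ μ) * X3 + (γ * ‖x‖ ^ (α * μ)) * X6
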